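/- Let G be a finite abelian group of order h, let p be a prime not dividing h, let χ: G → ℂ× be a character with values generating the ring ℤ[χ], and let 𝒲 be the completion of ℤ[χ] at a prime above p. Then 𝒲, regarded as a ℤ[G]-module via χ, is flat over ℤ[G]. -/

import Mathlib

set_option synthInstance.maxHeartbeats 1000000
set_option maxHeartbeats 4000000

/-- The ring `ℤ[χ] ⊆ ℂ` generated by the values of a character `χ : G → ℂˣ`. -/
noncomputable abbrev zChi (G : Type*) [CommGroup G] (χ : G →* ℂˣ) : Subalgebra ℤ ℂ :=
  Algebra.adjoin ℤ (Set.range fun σ : G => ((χ σ : ℂˣ) : ℂ))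

/-- The character `χ` viewed as a character with values in `ℤ[χ]`. -/
noncomputable def chiAdj (G : Type*) [CommGroup G] (χ : G →* ℂˣ) : G →* zChi G χ where
  toFun σ := ⟨((χ σ : ℂˣ) : ℂ), Algebra.subset_adjoin ⟨σ, rfl⟩⟩
  map_one' := by ext; simp
  map_mul' σ τ := by ext; simp

open AdicCompletion in
/-- In the `I`-adic completion, `1 - t` is invertible for `t ∈ I`. -/
theorem aux_isUnit_one_sub {R : Type*} [CommRing R] (I : Ideal R) {t : R} (ht : t ∈ I) :
    IsUnit (1 - algebraMap R (AdicCompletion I R) t) := by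
  have hmem : ∀ n : ℕ, t ^ n ∈ (I ^ n • ⊤ : Submodule R R) := fun n => by
    simpa using Submodule.smul_mem_smul (Ideal.pow_mem_pow ht n) (Submodule.mem_top (x := (1 : R)))
  have hf : ∀ n : ℕ, (∑ i ∈ Finset.range n, t ^ i) ≡ (∑ i ∈ Finset.range (n + 1), t ^ i)
      [SMOD (I ^ n • ⊤ : Submodule R R)] := by
    intro n
    rw [SModEq.sub_mem]
    have h : (∑ i ∈ Finset.range n, t ^ i) - (∑ i ∈ Finset.range (n + 1), t ^ i) = -(t ^ n) := by
      rw [Finset.sum_range_succ]; ring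
    rw [h]
    exact Submodule.neg_mem _ (hmem n)
  set F : AdicCauchySequence I R := AdicCauchySequence.mk (I := I) (M := R) _ hf with hF
  refine IsUnit.of_mul_eq_one (AdicCompletion.mk I R F) ?_
  have h1 : (1 : AdicCompletion I R) = AdicCompletion.mk I R 1 := (map_one (mkₐ I)).symm
  have key : AdicCompletion.mk I R (F - t • F - 1) = 0 := by
    apply AdicCompletion.mk_zero_of
    refine ⟨0, fun n _ => ⟨n, le_rfl, n, le_rfl, ?_⟩⟩
    have hval : ((F - t • F - 1 : AdicCauchySequence I R) : ℕ → R) n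
        = (∑ i ∈ Finset.range n, t ^ i) - t • (∑ i ∈ Finset.range n, t ^ i) - 1 := rfl
    have hgeom : (∑ i ∈ Finset.range n, t ^ i) * (t - 1) = t ^ n - 1 := geom_sum_mul t n
    have hval' : ((F - t • F - 1 : AdicCauchySequence I R) : ℕ → R) n = -(t ^ n) := by
      rw [hval, smul_eq_mul]
      linear_combination -hgeom
    rw [hval']
    exact Submodule.neg_mem _ (hmem n)
  calc (1 - algebraMap R (AdicCompletion I R) t) * AdicCompletion.mk I R F
      = AdicCompletion.mk I R F - t • AdicCompletion.mk I R F := by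
        rw [sub_mul, one_mul, ← Algebra.smul_def]
    _ = AdicCompletion.mk I R (F - t • F) := by rw [map_sub, map_smul]
    _ = 1 := by
        have h2 : AdicCompletion.mk I R (F - t • F) - AdicCompletion.mk I R 1 = 0 := by
          rw [← map_sub]; exact key
        rw [sub_eq_zero] at h2
        rw [h2, ← h1]

/-- A commutative ring `M` that is `ℤ`-flat and in which the order of `G` is invertible is
flat as a `MonoidAlgebra ℤ G`-module via any ring homomorphism `g : MonoidAlgebra ℤ G →+* M`. -/
theorem aux_retract {G : Type*} [CommGroup G] [Fintype G] {M : Type*} [CommRing M]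
    [Module.Flat ℤ M] (g : MonoidAlgebra ℤ G →+* M)
    (hu : IsUnit ((Fintype.card G : M))) :
    letI : Module (MonoidAlgebra ℤ G) M := Module.compHom _ g
    Module.Flat (MonoidAlgebra ℤ G) M := by
  letI i : Module (MonoidAlgebra ℤ G) M := Module.compHom _ g
  classical
  have hsmul : ∀ (a : MonoidAlgebra ℤ G) (m : M), a • m = g a * m := fun _ _ => rfl
  set φ : G →* M := (g : MonoidAlgebra ℤ G →* M).comp (MonoidAlgebra.of ℤ G) with hφdef
  have hg : ∀ σ : G, g (MonoidAlgebra.of ℤ G σ) = φ σ := fun _ => rfl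
  set c : M := ↑hu.unit⁻¹ with hcdef
  have hc : (Fintype.card G : M) * c = 1 := hu.mul_val_inv
  -- the projection π : A ⊗[ℤ] M → M
  let bil : MonoidAlgebra ℤ G →ₗ[ℤ] M →ₗ[ℤ] M :=
    { toFun := fun x => LinearMap.mulLeft ℤ (g x)
      map_add' := fun x y => by ext m; simp [add_mul]
      map_smul' := fun z x => by ext m; simp [smul_mul_assoc] }
  have hbil : ∀ (x : MonoidAlgebra ℤ G) (m : M), bil x m = g x * m := fun _ _ => rfl
  set π0 : TensorProduct ℤ (MonoidAlgebra ℤ G) M →ₗ[ℤ] M := TensorProduct.lift bil with hπ0def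
  have hπ0 : ∀ (x : MonoidAlgebra ℤ G) (m : M), π0 (x ⊗ₜ[ℤ] m) = g x * m := fun _ _ => rfl
  let π : TensorProduct ℤ (MonoidAlgebra ℤ G) M →ₗ[MonoidAlgebra ℤ G] M :=
    { toFun := π0
      map_add' := map_add π0
      map_smul' := fun x y => by
        show π0 (x • y) = x • π0 y
        induction y using TensorProduct.induction_on with
        | zero => simp
        | tmul b m =>
          rw [TensorProduct.smul_tmul', hπ0, hπ0, smul_eq_mul, map_mul, mul_assoc, ← hsmul]
        | add u v hu hv =>
          rw [smul_add, map_add, hu, hv, map_add, smul_add] }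
  -- the section s : M → A ⊗[ℤ] M
  set s0 : M →ₗ[ℤ] TensorProduct ℤ (MonoidAlgebra ℤ G) M :=
    ∑ σ : G, (TensorProduct.mk ℤ (MonoidAlgebra ℤ G) M (MonoidAlgebra.of ℤ G σ)).comp
      (LinearMap.mulLeft ℤ (c * φ σ⁻¹)) with hs0def
  have hs0 : ∀ m : M, s0 m
      = ∑ σ : G, (MonoidAlgebra.of ℤ G σ) ⊗ₜ[ℤ] (c * φ σ⁻¹ * m) := by
    intro m
    rw [hs0def]
    exact LinearMap.sum_apply _ _ _
  have hkey : ∀ (τ : G) (m : M),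
      s0 ((MonoidAlgebra.of ℤ G τ) • m) = (MonoidAlgebra.of ℤ G τ) • s0 m := by
    intro τ m
    rw [hs0, hs0, Finset.smul_sum]
    rw [hsmul, hg]
    refine (Fintype.sum_equiv (Equiv.mulLeft τ) _ _ ?_).symm
    intro σ
    simp only [Equiv.coe_mulLeft]
    rw [TensorProduct.smul_tmul']
    have h1 : (MonoidAlgebra.of ℤ G τ) • (MonoidAlgebra.of ℤ G σ)
        = MonoidAlgebra.of ℤ G (τ * σ) := by
      rw [smul_eq_mul, ← map_mul]
    have h2 : φ ((τ * σ)⁻¹) * φ τ = φ σ⁻¹ := by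
      rw [← map_mul]
      congr 1
      group
    have h3 : c * φ ((τ * σ)⁻¹) * (φ τ * m) = c * φ σ⁻¹ * m := by
      linear_combination c * m * h2
    rw [h1, h3]
  let s : M →ₗ[MonoidAlgebra ℤ G] TensorProduct ℤ (MonoidAlgebra ℤ G) M :=
    { toFun := s0
      map_add' := map_add s0
      map_smul' := fun x m => by
        show s0 (x • m) = x • s0 m
        induction x using MonoidAlgebra.induction_on with
        | of τ => exact hkey τ m
        | add f h hf hh => rw [add_smul, map_add, hf, hh, add_smul]
        | smul z f hf =>
          have h1 : (z • f) • m = z • (f • m) := by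
            rw [hsmul, hsmul, map_zsmul, smul_mul_assoc]
          rw [h1, map_zsmul, hf, smul_assoc]
    }
  have hretr : π.comp s = LinearMap.id := by
    ext m
    have h1 : π.comp s m = π0 (s0 m) := rfl
    rw [LinearMap.id_apply, h1, hs0, map_sum]
    have hterm : ∀ σ : G, π0 ((MonoidAlgebra.of ℤ G σ) ⊗ₜ[ℤ] (c * φ σ⁻¹ * m)) = c * m := by
      intro σ
      rw [hπ0, hg]
      have h2 : φ σ * φ σ⁻¹ = 1 := by
        rw [← map_mul, mul_inv_cancel, map_one]
      linear_combination m * c * h2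
    rw [Finset.sum_congr rfl (fun σ _ => hterm σ), Finset.sum_const, Finset.card_univ,
      nsmul_eq_mul, ← mul_assoc, hc, one_mul]
  exact Module.Flat.of_retract (R := MonoidAlgebra ℤ G)
    (M := TensorProduct ℤ (MonoidAlgebra ℤ G) M) (N := M) s π hretr

/-- Abstract version: flatness of the adic completion over the group algebra. -/
theorem aux_flat {R : Type*} [CommRing R] [IsNoetherianRing R] [Module.Flat ℤ R]
    {G : Type*} [CommGroup G] [Fintype G] (ψ : G →* R) (I : Ideal R)
    (hb : ∃ t ∈ I, ∃ b : R, (Fintype.card G : R) * b = 1 - t) :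
    letI : Module (MonoidAlgebra ℤ G) (AdicCompletion I R) :=
      Module.compHom _ ((algebraMap R (AdicCompletion I R)).comp
        ((MonoidAlgebra.lift ℤ R G ψ).toRingHom))
    Module.Flat (MonoidAlgebra ℤ G) (AdicCompletion I R) := by
  haveI h1 : Module.Flat R (AdicCompletion I R) :=
    (AdicCompletion.flat_of_isNoetherian (I := I))
  haveI h2 : Module.Flat ℤ (AdicCompletion I R) :=
    Module.Flat.trans ℤ R (AdicCompletion I R)
  obtain ⟨t, htI, b, hbt⟩ := hb
  have hu : IsUnit ((Fintype.card G : AdicCompletion I R)) := by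
    have h1 : IsUnit (1 - algebraMap R (AdicCompletion I R) t) := aux_isUnit_one_sub I htI
    have h3 : IsUnit ((Fintype.card G : AdicCompletion I R)
        * algebraMap R (AdicCompletion I R) b) := by
      rw [show ((Fintype.card G : AdicCompletion I R))
          = algebraMap R (AdicCompletion I R) (Fintype.card G : R) from
        (map_natCast _ _).symm, ← map_mul, hbt, map_sub, map_one]
      exact h1
    exact isUnit_of_mul_isUnit_left h3
  exact aux_retract ((algebraMap R (AdicCompletion I R)).comp
    ((MonoidAlgebra.lift ℤ R G ψ).toRingHom)) hu

/-- Let `G` be a finite abelian group of order `h`, `p` a prime not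
dividing `h`, `χ : G → ℂˣ` a character, `ℤ[χ]` the ring generated by its values,
and `𝒲` the completion of `ℤ[χ]` at a prime `𝔭` above `p`.  Then `𝒲`, regarded as a
`ℤ[G]`-module via (the linear extension of) `χ`, is flat over `ℤ[G]`. -/
theorem stmt_1 (p : ℕ) (hp : p.Prime) (G : Type*) [CommGroup G] [Fintype G]
    (hdvd : ¬ p ∣ Fintype.card G) (χ : G →* ℂˣ)
    (𝔭 : Ideal (zChi G χ)) [𝔭.IsPrime] (hp𝔭 : (p : zChi G χ) ∈ 𝔭) :
    letI : Module (MonoidAlgebra ℤ G) (AdicCompletion 𝔭 (zChi G χ)) :=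
      Module.compHom _
        ((algebraMap (zChi G χ) (AdicCompletion 𝔭 (zChi G χ))).comp
          ((MonoidAlgebra.lift ℤ (zChi G χ) G (chiAdj G χ)).toRingHom))
    Module.Flat (MonoidAlgebra ℤ G) (AdicCompletion 𝔭 (zChi G χ)) := by
  classical
  have hint : ∀ x ∈ Set.range fun σ : G => ((χ σ : ℂˣ) : ℂ), IsIntegral ℤ x := by
    rintro x ⟨σ, rfl⟩
    have hx : ((χ σ : ℂˣ) : ℂ) ^ Fintype.card G = 1 := by
      rw [← Units.val_pow_eq_pow_val, ← map_pow, pow_card_eq_one, map_one, Units.val_one]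
    exact ⟨Polynomial.X ^ Fintype.card G - Polynomial.C 1,
      Polynomial.monic_X_pow_sub_C 1 Fintype.card_ne_zero,
      by simp [hx]⟩
  have hfg : (Algebra.adjoin ℤ (Set.range fun σ : G => ((χ σ : ℂˣ) : ℂ))).toSubmodule.FG :=
    fg_adjoin_of_finite (Set.finite_range _) hint
  haveI hfin : Module.Finite ℤ (zChi G χ) := Module.Finite.iff_fg.mpr hfg
  haveI : IsNoetherianRing (zChi G χ) := Algebra.FiniteType.isNoetherianRing ℤ (zChi G χ)
  haveI : Module.Free ℤ (zChi G χ) := Module.free_of_finite_type_torsion_free'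
  obtain ⟨a, b, hab⟩ :=
    Nat.isCoprime_iff_coprime.mpr (hp.coprime_iff_not_dvd.mpr hdvd)
  have habR : (a : zChi G χ) * (p : zChi G χ)
      + (b : zChi G χ) * (Fintype.card G : zChi G χ) = 1 := by
    exact_mod_cast congrArg (fun z : ℤ => (z : zChi G χ)) hab
  exact aux_flat (chiAdj G χ) 𝔭
    ⟨(a : zChi G χ) * (p : zChi G χ), Ideal.mul_mem_left _ _ hp𝔭, (b : zChi G χ),
      by linear_combination habR⟩
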